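/- Fix complex numbers a, ā, b, b̄, d. The set of ordered quadruples (V₁, V₂, V₃, V₄) of nonzero complex numbers satisfying V₂V₃ = a, V₁V₄ = ā, V₁V₂² + V₃²V₄ = b, V₂V₄² + V₁²V₃ = b̄, and (V₁V₂² − V₃²V₄)(V₂V₄² − V₁²V₃) = d has at most ten elements. -/

import Mathlib

/-!
Put `P = V₁V₂²`, `Q = V₃²V₄`, `R = V₂V₄²`, `S = V₁²V₃`. Then `P + Q = b`, `PQ = a²ā`,
`R + S = b̄` and `RS = aā²`, so `u = P − Q` and `v = R − S` satisfy `u² = b² − 4a²ā`,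
`v² = b̄² − 4aā²` and `uv = d`; these three equations leave at most two pairs `(u, v)`.
Once `(u, v)` is fixed, so are `P = (b + u)/2` and `S = (b̄ − v)/2`; then `V₂⁵ = aP²/S` leaves
at most five values of `V₂`, and `V₂` determines `V₁ = P/V₂²`, `V₃ = a/V₂`, `V₄ = ā/V₁`.
-/

open Set

theorem Set.encard_le_encard_mul_of_mapsTo {α β : Type*} {s : Set α} {t : Set β} {f : α → β}
    (hf : MapsTo f s t) (ht : t.Finite) {n : ℕ∞} (hn : ∀ y ∈ t, (s ∩ f ⁻¹' {y}).encard ≤ n) :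
    s.encard ≤ t.encard * n :=
  calc s.encard ≤ (⋃ y ∈ ht.toFinset, s ∩ f ⁻¹' {y}).encard :=
        encard_le_encard fun x hx => mem_biUnion (by simpa using hf hx) ⟨hx, rfl⟩
    _ ≤ ∑ y ∈ ht.toFinset, (s ∩ f ⁻¹' {y}).encard := Finset.set_encard_biUnion_le _ _
    _ ≤ ∑ _y ∈ ht.toFinset, n := Finset.sum_le_sum fun y hy => hn y (by simpa using hy)
    _ = t.encard * n := by rw [Finset.sum_const, nsmul_eq_mul, ht.encard_eq_coe_toFinset_card]

theorem Set.encard_setOf_pow_eq_le {R : Type*} [CommRing R] [IsDomain R] {n : ℕ} (hn : 0 < n)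
    (c : R) : {z : R | z ^ n = c}.encard ≤ n := by
  classical
  have h : {z : R | z ^ n = c} = (Polynomial.nthRootsFinset n c : Set R) := by
    ext z; simp [Polynomial.mem_nthRootsFinset hn]
  rw [h, encard_coe_eq_coe_finsetCard, Polynomial.nthRootsFinset_def]
  exact_mod_cast (Multiset.toFinset_card_le _).trans (Polynomial.card_nthRoots n c)

section SquareRoots

variable {R : Type*} [CommRing R] [NoZeroDivisors R]

theorem setOf_sq_sq_mul_subset_pair (u₀ v₀ : R) :
    {p : R × R | p.1 ^ 2 = u₀ ^ 2 ∧ p.2 ^ 2 = v₀ ^ 2 ∧ p.1 * p.2 = u₀ * v₀} ⊆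
      {(u₀, v₀), (-u₀, -v₀)} := by
  rintro ⟨u, v⟩ ⟨hu, hv, huv⟩
  rcases sq_eq_sq_iff_eq_or_eq_neg.1 hu with rfl | rfl <;>
    rcases sq_eq_sq_iff_eq_or_eq_neg.1 hv with rfl | rfl
  · exact Or.inl rfl
  · by_cases h : u = 0
    · exact Or.inr (by simp [h])
    · exact Or.inl (Prod.ext rfl (mul_left_cancel₀ h huv))
  · by_cases h : v = 0
    · exact Or.inr (by simp [h])
    · exact Or.inl (Prod.ext (mul_right_cancel₀ h huv) rfl)
  · exact Or.inr rfl

theorem encard_setOf_sq_sq_mul_le_two (α β γ : R) :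
    {p : R × R | p.1 ^ 2 = α ∧ p.2 ^ 2 = β ∧ p.1 * p.2 = γ}.encard ≤ 2 := by
  rcases eq_empty_or_nonempty {p : R × R | p.1 ^ 2 = α ∧ p.2 ^ 2 = β ∧ p.1 * p.2 = γ} with
    h | ⟨⟨u₀, v₀⟩, rfl, rfl, rfl⟩
  · simp [h]
  · calc _ ≤ ({(u₀, v₀), (-u₀, -v₀)} : Set (R × R)).encard :=
          encard_le_encard (setOf_sq_sq_mul_subset_pair u₀ v₀)
      _ ≤ ({(-u₀, -v₀)} : Set (R × R)).encard + 1 := encard_insert_le _ _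
      _ = 2 := by rw [encard_singleton]; rfl

end SquareRoots

section Quadruples

variable {K : Type*} [Field K]

def invariantFiber (a abar b bbar d : K) : Set (K × K × K × K) :=
  {w | ∃ V₁ V₂ V₃ V₄ : K, w = (V₁, V₂, V₃, V₄) ∧
      V₁ ≠ 0 ∧ V₂ ≠ 0 ∧ V₃ ≠ 0 ∧ V₄ ≠ 0 ∧
      V₂ * V₃ = a ∧ V₁ * V₄ = abar ∧
      V₁ * V₂ ^ 2 + V₃ ^ 2 * V₄ = b ∧ V₂ * V₄ ^ 2 + V₁ ^ 2 * V₃ = bbar ∧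
      (V₁ * V₂ ^ 2 - V₃ ^ 2 * V₄) * (V₂ * V₄ ^ 2 - V₁ ^ 2 * V₃) = d}

def differencePair (w : K × K × K × K) : K × K :=
  (w.1 * w.2.1 ^ 2 - w.2.2.1 ^ 2 * w.2.2.2, w.2.1 * w.2.2.2 ^ 2 - w.1 ^ 2 * w.2.2.1)

variable (a abar b bbar d : K)

theorem mapsTo_differencePair_invariantFiber :
    MapsTo differencePair (invariantFiber a abar b bbar d)
      {p | p.1 ^ 2 = b ^ 2 - 4 * a ^ 2 * abar ∧ p.2 ^ 2 = bbar ^ 2 - 4 * a * abar ^ 2 ∧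
        p.1 * p.2 = d} := by
  rintro _ ⟨V₁, V₂, V₃, V₄, rfl, -, -, -, -, rfl, rfl, rfl, rfl, rfl⟩
  exact ⟨by simp only [differencePair]; ring, by simp only [differencePair]; ring, rfl⟩

theorem invariantFiber_inter_preimage_differencePair_subset (htwo : (2 : K) ≠ 0) (u v : K) :
    invariantFiber a abar b bbar d ∩ differencePair ⁻¹' {(u, v)} ⊆
      (fun z => ((b + u) / (2 * z ^ 2), z, a / z, 2 * abar * z ^ 2 / (b + u))) ''
        {z | z ^ 5 = a * (b + u) ^ 2 / (2 * (bbar - v))} := by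
  rintro _ ⟨⟨V₁, V₂, V₃, V₄, rfl, h1, h2, h3, -, rfl, rfl, rfl, rfl, -⟩, huv⟩
  obtain ⟨rfl, rfl⟩ := Prod.mk.inj huv
  have hP : V₁ * V₂ ^ 2 + V₃ ^ 2 * V₄ + (V₁ * V₂ ^ 2 - V₃ ^ 2 * V₄) = 2 * (V₁ * V₂ ^ 2) := by
    ring
  have hS : V₂ * V₄ ^ 2 + V₁ ^ 2 * V₃ - (V₂ * V₄ ^ 2 - V₁ ^ 2 * V₃) = 2 * (V₁ ^ 2 * V₃) := by
    ring
  refine ⟨V₂, ?_, ?_⟩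
  · rw [mem_ofPred_eq, hP, hS]
    field_simp
  · simp only [hP, Prod.mk.injEq, true_and]
    refine ⟨?_, ?_, ?_⟩ <;> field_simp

theorem encard_invariantFiber_le_ten (htwo : (2 : K) ≠ 0) :
    (invariantFiber a abar b bbar d).encard ≤ 10 := by
  have hU := encard_setOf_sq_sq_mul_le_two
    (b ^ 2 - 4 * a ^ 2 * abar) (bbar ^ 2 - 4 * a * abar ^ 2) d
  refine (encard_le_encard_mul_of_mapsTo (n := 5) (mapsTo_differencePair_invariantFiber ..)
    (finite_of_encard_le_coe hU) fun ⟨u, v⟩ _ => ?_).trans ?_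
  · calc _ ≤ _ := encard_le_encard
          (invariantFiber_inter_preimage_differencePair_subset a abar b bbar d htwo u v)
      _ ≤ _ := encard_image_le _ _
      _ ≤ 5 := encard_setOf_pow_eq_le (by norm_num) _
  · calc _ ≤ (2 : ℕ∞) * 5 := by gcongr
      _ = 10 := rfl

end Quadruples

/-- For fixed `(a, abar, b, bbar, d)`, the set of quadruples `(V₁, V₂, V₃, V₄)` of *nonzero*
complex numbers with `V₂V₃ = a`, `V₁V₄ = abar`, `V₁V₂² + V₃²V₄ = b`,
`V₂V₄² + V₁²V₃ = bbar` and `(V₁V₂² − V₃²V₄)(V₂V₄² − V₁²V₃) = d` has at most ten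
elements. -/
theorem stmt_11 (a abar b bbar d : ℂ) :
    Set.encard {w : ℂ × ℂ × ℂ × ℂ | ∃ V₁ V₂ V₃ V₄ : ℂ, w = (V₁, V₂, V₃, V₄) ∧
      V₁ ≠ 0 ∧ V₂ ≠ 0 ∧ V₃ ≠ 0 ∧ V₄ ≠ 0 ∧
      V₂ * V₃ = a ∧ V₁ * V₄ = abar ∧
      V₁ * V₂ ^ 2 + V₃ ^ 2 * V₄ = b ∧ V₂ * V₄ ^ 2 + V₁ ^ 2 * V₃ = bbar ∧
      (V₁ * V₂ ^ 2 - V₃ ^ 2 * V₄) * (V₂ * V₄ ^ 2 - V₁ ^ 2 * V₃) = d} ≤ 10 :=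
  encard_invariantFiber_le_ten a abar b bbar d two_ne_zero
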